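/- Let D ⊆ ℝⁿ be compact convex and f convex and twice differentiable with ∇f Lipschitz-continuous on D with constant L > 0. Then the curvature constant C_f (defined as the supremum over x, s ∈ D, α ∈ [0,1], y = x + α(s-x), of (1/α²)(f(y) - f(x) - ⟨y-x, ∇f(x)⟩)) satisfies C_f ≤ (1/2)·diam(D)²·L. -/

import Mathlib

/-!
Along the segment from `x` to `y = x + α (s - x)` the Lipschitz bound on `∇f` gives the descent
lemma `f y - f x - ⟪y - x, ∇f x⟫ ≤ L/2 ‖y - x‖² = α² L/2 ‖s - x‖²`, so every quotient in the
supremum is at most `L/2 ‖s - x‖² ≤ L/2 diam(D)²`.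
-/

open InnerProductSpace

section

variable {E : Type*} [NormedAddCommGroup E] [InnerProductSpace ℝ E] [CompleteSpace E]
  {f : E → ℝ}

theorem HasGradientAt.hasDerivAt_comp_add_smul {g p v : E} {t : ℝ}
    (hf : HasGradientAt f g (p + t • v)) :
    HasDerivAt (fun s : ℝ => f (p + s • v)) (inner ℝ g v) t := by
  have hline : HasDerivAt (fun s : ℝ => p + s • v) v t := by
    simpa using ((hasDerivAt_id t).smul_const v).const_add p
  simpa only [toDual_apply_apply, Function.comp_def] using
    hf.hasFDerivAt.comp_hasDerivAt t hline

theorem sub_sub_inner_gradient_le_of_lipschitz {D : Set E} (hD : Convex ℝ D)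
    (hf : ∀ x ∈ D, DifferentiableAt ℝ f x) {L : ℝ}
    (hLip : ∀ x ∈ D, ∀ y ∈ D, ‖gradient f y - gradient f x‖ ≤ L * ‖y - x‖)
    {p q : E} (hp : p ∈ D) (hq : q ∈ D) :
    f q - f p - inner ℝ (q - p) (gradient f p) ≤ L / 2 * ‖q - p‖ ^ 2 := by
  obtain ⟨v, rfl⟩ : ∃ v, q = p + v := ⟨q - p, (add_sub_cancel p q).symm⟩
  rw [add_sub_cancel_left]
  -- `φ 1 ≤ φ 0` is the claim.
  let φ : ℝ → ℝ := fun t => f (p + t • v) - t * inner ℝ v (gradient f p) - L / 2 * t ^ 2 * ‖v‖ ^ 2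
  let φ' : ℝ → ℝ := fun t =>
    inner ℝ (gradient f (p + t • v)) v - inner ℝ v (gradient f p) - L * t * ‖v‖ ^ 2
  have hmem : ∀ t ∈ Set.Icc (0 : ℝ) 1, p + t • v ∈ D := fun t ht => hD.add_smul_mem hp hq ht
  have hφ : ∀ t ∈ Set.Icc (0 : ℝ) 1, HasDerivAt φ (φ' t) t := by
    intro t ht
    have := (((hf _ (hmem t ht)).hasGradientAt.hasDerivAt_comp_add_smul.sub
      ((hasDerivAt_id t).mul_const (inner ℝ v (gradient f p)))).sub
      (((hasDerivAt_pow 2 t).const_mul (L / 2)).mul_const (‖v‖ ^ 2)))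
    exact this.congr_deriv (by simp only [φ']; ring)
  have hφ'_nonpos : ∀ t ∈ Set.Icc (0 : ℝ) 1, φ' t ≤ 0 := by
    intro t ht
    have hstep : ‖p + t • v - p‖ = t * ‖v‖ := by
      rw [add_sub_cancel_left, norm_smul, Real.norm_of_nonneg ht.1]
    have hinner : inner ℝ (gradient f (p + t • v) - gradient f p) v ≤ L * t * ‖v‖ ^ 2 :=
      calc inner ℝ (gradient f (p + t • v) - gradient f p) v
          ≤ ‖gradient f (p + t • v) - gradient f p‖ * ‖v‖ := real_inner_le_norm _ _
        _ ≤ L * ‖p + t • v - p‖ * ‖v‖ := by gcongr; exact hLip p hp _ (hmem t ht)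
        _ = L * t * ‖v‖ ^ 2 := by rw [hstep]; ring
    calc φ' t = inner ℝ (gradient f (p + t • v) - gradient f p) v - L * t * ‖v‖ ^ 2 := by
          simp only [φ']
          rw [inner_sub_left, real_inner_comm (gradient f p) v]
      _ ≤ 0 := sub_nonpos.2 hinner
  have hanti : AntitoneOn φ (Set.Icc 0 1) := by
    refine antitoneOn_of_hasDerivWithinAt_nonpos (f' := φ') (convex_Icc 0 1)
      (fun t ht => (hφ t ht).continuousAt.continuousWithinAt) (fun t ht => ?_) (fun t ht => ?_)
    all_goals rw [interior_Icc] at ht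
    · exact (hφ t (Set.Ioo_subset_Icc_self ht)).hasDerivWithinAt
    · exact hφ'_nonpos t (Set.Ioo_subset_Icc_self ht)
  have hφ01 := hanti (Set.left_mem_Icc.2 zero_le_one) (Set.right_mem_Icc.2 zero_le_one) zero_le_one
  simp only [φ, one_smul, zero_smul, add_zero, one_mul, one_pow, zero_mul, sub_zero,
    ne_eq, OfNat.ofNat_ne_zero, not_false_eq_true, zero_pow, mul_zero] at hφ01
  linarith

theorem one_div_sq_mul_sub_sub_inner_gradient_le {D : Set E} (hD : Convex ℝ D)
    (hf : ∀ x ∈ D, DifferentiableAt ℝ f x) {L : ℝ} (hL : 0 ≤ L)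
    (hLip : ∀ x ∈ D, ∀ y ∈ D, ‖gradient f y - gradient f x‖ ≤ L * ‖y - x‖)
    {x s : E} (hx : x ∈ D) (hs : s ∈ D) {α : ℝ} (hα : α ∈ Set.Icc (0 : ℝ) 1) :
    (1 / α ^ 2) * (f (x + α • (s - x)) - f x - inner ℝ (x + α • (s - x) - x) (gradient f x)) ≤
      L / 2 * ‖s - x‖ ^ 2 := by
  rcases hα.1.eq_or_lt with rfl | hα₀
  · -- `1 / 0 = 0`, so the quotient at `α = 0` is `0`.
    simp only [ne_eq, OfNat.ofNat_ne_zero, not_false_eq_true, zero_pow, div_zero, zero_mul]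
    positivity
  · have hy : x + α • (s - x) ∈ D := hD.add_smul_sub_mem hx hs hα
    calc (1 / α ^ 2) * (f (x + α • (s - x)) - f x
            - inner ℝ (x + α • (s - x) - x) (gradient f x))
        ≤ (1 / α ^ 2) * (L / 2 * ‖x + α • (s - x) - x‖ ^ 2) := by
          gcongr
          exact sub_sub_inner_gradient_le_of_lipschitz hD hf hLip hx hy
      _ = L / 2 * ‖s - x‖ ^ 2 := by
          rw [add_sub_cancel_left, norm_smul, Real.norm_of_nonneg hα.1]
          field_simp

end

theorem curvature_le_of_lipschitz_gradient_general
    {n : ℕ} (D : Set (EuclideanSpace ℝ (Fin n)))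
    (hDcomp : IsCompact D) (hDconv : Convex ℝ D)
    (f : EuclideanSpace ℝ (Fin n) → ℝ)
    (hf : ContDiff ℝ 2 f)
    (L : ℝ) (hL : 0 < L)
    (hLip : ∀ x ∈ D, ∀ y ∈ D, ‖gradient f y - gradient f x‖ ≤ L * ‖y - x‖) :
    sSup {r : ℝ | ∃ x ∈ D, ∃ s ∈ D, ∃ α ∈ Set.Icc (0 : ℝ) 1,
        r = (1 / α ^ 2) *
          (f (x + α • (s - x)) - f x - inner ℝ (x + α • (s - x) - x) (gradient f x))} ≤
      (1 / 2) * Metric.diam D ^ 2 * L := by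
  refine Real.sSup_le ?_ (by positivity)
  rintro r ⟨x, hx, s, hs, α, hα, rfl⟩
  have hsx : ‖s - x‖ ≤ Metric.diam D := by
    rw [← dist_eq_norm]
    exact Metric.dist_le_diam_of_mem hDcomp.isBounded hs hx
  calc _ ≤ L / 2 * ‖s - x‖ ^ 2 :=
        one_div_sq_mul_sub_sub_inner_gradient_le hDconv
          (fun x _ => (hf.differentiable two_ne_zero).differentiableAt) hL.le hLip hx hs hα
    _ ≤ L / 2 * Metric.diam D ^ 2 := by gcongr
    _ = (1 / 2) * Metric.diam D ^ 2 * L := by ring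

/-- If `f` is convex and twice differentiable on the compact convex set `D ⊆ ℝⁿ`
and its gradient is Lipschitz-continuous on `D` with constant `L > 0`, then the
curvature constant satisfies `C_f ≤ (1/2) · diam(D)² · L`. -/
theorem curvature_le_of_lipschitz_gradient
    {n : ℕ} (D : Set (EuclideanSpace ℝ (Fin n)))
    (hDcomp : IsCompact D) (hDconv : Convex ℝ D)
    (f : EuclideanSpace ℝ (Fin n) → ℝ)
    (hf : ContDiff ℝ 2 f) (hconv : ConvexOn ℝ D f)
    (L : ℝ) (hL : 0 < L)
    (hLip : ∀ x ∈ D, ∀ y ∈ D, ‖gradient f y - gradient f x‖ ≤ L * ‖y - x‖) :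
    sSup {r : ℝ | ∃ x ∈ D, ∃ s ∈ D, ∃ α ∈ Set.Icc (0 : ℝ) 1,
        r = (1 / α ^ 2) *
          (f (x + α • (s - x)) - f x - inner ℝ (x + α • (s - x) - x) (gradient f x))} ≤
      (1 / 2) * Metric.diam D ^ 2 * L :=
  curvature_le_of_lipschitz_gradient_general D hDcomp hDconv f hf L hL hLip
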